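/- Heine's transformation: for complex q with |q| < 1 and complex α, β, γ, τ with |τ| < 1, |β| < 1, and γ not of the form q^{-k}, one has ∑_{n=0}^∞ (α;q)_n(β;q)_n / ((γ;q)_n(q;q)_n) τ^n = ((β;q)_∞ (ατ;q)_∞ / ((γ;q)_∞ (τ;q)_∞)) · ∑_{n=0}^∞ (γ/β;q)_n(τ;q)_n / ((ατ;q)_n(q;q)_n) β^n. -/

import Mathlib

/-!
The q-binomial theorem `∑ (a;q)_n / (q;q)_n z^n = (az;q)_∞ / (z;q)_∞` follows from the functional
equation `(1 - z) F(z) = (1 - az) F(zq)` of the left side `F`, iterated `N` times and letting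
`F(zq^N) → F(0) = 1`. In Heine's series write `(β;q)_n / (γ;q)_n = (β;q)_∞ / (γ;q)_∞ · (γq^n;q)_∞ / (βq^n;q)_∞`
and expand the last ratio by the q-binomial theorem as a series in `βq^n`. The resulting double
series converges absolutely; summing it in the other order, the inner sum over `n` is again a
q-binomial series, in `τq^m`, which produces the right-hand side.
-/

open Finset Filter Topology

noncomputable section

def qPochhammer (q a : ℂ) (n : ℕ) : ℂ := ∏ k ∈ range n, (1 - a * q ^ k)

def qPochhammerInf (q a : ℂ) : ℂ := ∏' k, (1 - a * q ^ k)

def qBinomialTerm (q a z : ℂ) (n : ℕ) : ℂ := qPochhammer q a n / qPochhammer q q n * z ^ n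

def qBinomialSeries (q a z : ℂ) : ℂ := ∑' n, qBinomialTerm q a z n

variable {q : ℂ}

theorem norm_mul_pow_lt_one (hq : ‖q‖ < 1) {z : ℂ} (hz : ‖z‖ < 1) (n : ℕ) :
    ‖z * q ^ n‖ < 1 := by
  rw [norm_mul, norm_pow]
  exact (mul_le_of_le_one_right (norm_nonneg z) (pow_le_one₀ (norm_nonneg q) hq.le)).trans_lt hz

theorem one_sub_mul_pow_ne_zero (hq : ‖q‖ < 1) {a : ℂ} (ha : ‖a‖ < 1) (k : ℕ) :
    1 - a * q ^ k ≠ 0 := by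
  refine sub_ne_zero.2 fun h ↦ ?_
  simpa [← h] using norm_mul_pow_lt_one hq ha k

theorem qPochhammer_ne_zero {a : ℂ} (ha : ∀ k, 1 - a * q ^ k ≠ 0) (n : ℕ) :
    qPochhammer q a n ≠ 0 :=
  prod_ne_zero_iff.2 fun k _ ↦ ha k

theorem summable_norm_mul_pow (hq : ‖q‖ < 1) (a : ℂ) : Summable (fun k : ℕ ↦ ‖a * q ^ k‖) :=
  ((summable_geometric_of_norm_lt_one hq).mul_left a).norm

theorem multipliable_one_sub_mul_pow (hq : ‖q‖ < 1) (a : ℂ) :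
    Multipliable (fun k : ℕ ↦ 1 - a * q ^ k) := by
  simpa only [sub_eq_add_neg] using
    multipliable_one_add_of_summable (by simpa only [norm_neg] using summable_norm_mul_pow hq a)

theorem tendsto_qPochhammer (hq : ‖q‖ < 1) (a : ℂ) :
    Tendsto (qPochhammer q a) atTop (𝓝 (qPochhammerInf q a)) :=
  (multipliable_one_sub_mul_pow hq a).hasProd.tendsto_prod_nat

theorem qPochhammerInf_ne_zero (hq : ‖q‖ < 1) {a : ℂ} (ha : ∀ k, 1 - a * q ^ k ≠ 0) :
    qPochhammerInf q a ≠ 0 := by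
  simpa only [qPochhammerInf, sub_eq_add_neg] using
    tprod_one_add_ne_zero_of_summable (by simpa only [sub_eq_add_neg] using ha)
      (by simpa only [norm_neg] using summable_norm_mul_pow hq a)

theorem qPochhammerInf_eq_qPochhammer_mul (hq : ‖q‖ < 1) (a : ℂ) (n : ℕ) :
    qPochhammerInf q a = qPochhammer q a n * qPochhammerInf q (a * q ^ n) := by
  have tail : (fun k ↦ 1 - a * q ^ (k + n)) = fun k ↦ 1 - a * q ^ n * q ^ k := by
    ext k; ring
  have h := Multipliable.prod_mul_tprod_nat_mul' (f := fun k ↦ 1 - a * q ^ k) (k := n)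
    (tail ▸ multipliable_one_sub_mul_pow hq (a * q ^ n))
  rw [tail] at h
  exact h.symm

theorem qPochhammerInf_mul_pow_div_qPochhammerInf (hq : ‖q‖ < 1) {x y : ℂ} (n : ℕ)
    (hx : qPochhammerInf q x ≠ 0) (hy : qPochhammer q y n ≠ 0) :
    qPochhammerInf q (y * q ^ n) / qPochhammerInf q (x * q ^ n) =
      qPochhammerInf q y / qPochhammerInf q x * (qPochhammer q x n / qPochhammer q y n) := by
  rw [qPochhammerInf_eq_qPochhammer_mul hq x n] at hx ⊢
  rw [qPochhammerInf_eq_qPochhammer_mul hq y n]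
  have := left_ne_zero_of_mul hx
  have := right_ne_zero_of_mul hx
  field_simp

theorem qBinomialTerm_mul (q a z w : ℂ) (n : ℕ) :
    qBinomialTerm q a (z * w) n = qBinomialTerm q a z n * w ^ n := by
  rw [qBinomialTerm, qBinomialTerm, mul_pow, mul_assoc]

theorem qBinomialTerm_succ_mul {a : ℂ} (z : ℂ) {n : ℕ} (hn : 1 - q * q ^ n ≠ 0) :
    qBinomialTerm q a z (n + 1) * (1 - q * q ^ n) =
      z * (1 - a * q ^ n) * qBinomialTerm q a z n := by
  simp only [qBinomialTerm, qPochhammer, prod_range_succ, pow_succ]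
  rw [← mul_div_mul_right (∏ k ∈ range n, (1 - a * q ^ k)) _ hn]
  ring

theorem qBinomialSeries_zero (q a : ℂ) : qBinomialSeries q a 0 = 1 := by
  rw [qBinomialSeries, tsum_eq_single 0 fun n hn ↦ by simp [qBinomialTerm, hn]]
  simp [qBinomialTerm, qPochhammer]

theorem exists_norm_qBinomialTerm_le (hq : ‖q‖ < 1) (a : ℂ) :
    ∃ C, ∀ z n, ‖qBinomialTerm q a z n‖ ≤ C * ‖z‖ ^ n := by
  have hlim : Tendsto (fun n ↦ qPochhammer q a n / qPochhammer q q n) atTop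
      (𝓝 (qPochhammerInf q a / qPochhammerInf q q)) :=
    (tendsto_qPochhammer hq a).div (tendsto_qPochhammer hq q)
      (qPochhammerInf_ne_zero hq (one_sub_mul_pow_ne_zero hq hq))
  obtain ⟨C, hC⟩ := isBounded_iff_forall_norm_le.1 (Metric.isBounded_range_of_tendsto _ hlim)
  refine ⟨C, fun z n ↦ ?_⟩
  rw [qBinomialTerm, norm_mul, norm_pow]
  gcongr
  exact hC _ (Set.mem_range_self n)

theorem summable_norm_qBinomialTerm (hq : ‖q‖ < 1) (a : ℂ) {z : ℂ} (hz : ‖z‖ < 1) :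
    Summable (fun n ↦ ‖qBinomialTerm q a z n‖) := by
  obtain ⟨C, hC⟩ := exists_norm_qBinomialTerm_le hq a
  exact ((summable_geometric_of_lt_one (norm_nonneg z) hz).mul_left C).of_nonneg_of_le
    (fun n ↦ norm_nonneg _) (hC z)

theorem qBinomialSeries_functional_eq (hq : ‖q‖ < 1) (a : ℂ) {z : ℂ} (hz : ‖z‖ < 1) :
    (1 - z) * qBinomialSeries q a z = (1 - a * z) * qBinomialSeries q a (z * q) := by
  have hzq : ‖z * q‖ < 1 := by simpa using norm_mul_pow_lt_one hq hz 1
  have hS : HasSum (qBinomialTerm q a z) (qBinomialSeries q a z) :=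
    (summable_norm_qBinomialTerm hq a hz).of_norm.hasSum
  have hSq : HasSum (qBinomialTerm q a (z * q)) (qBinomialSeries q a (z * q)) :=
    (summable_norm_qBinomialTerm hq a hzq).of_norm.hasSum
  -- the `(n + 1)`-st term of `F(z) - F(zq)` is `t_{n+1} (1 - q^{n+1})`, which the recurrence
  -- for `t` identifies with the `n`-th term of `z F(z) - a z F(zq)`; the `0`-th term vanishes
  have hshift : HasSum (fun n ↦ qBinomialTerm q a z (n + 1) - qBinomialTerm q a (z * q) (n + 1))
      (z * qBinomialSeries q a z - a * z * qBinomialSeries q a (z * q)) := by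
    refine ((hS.mul_left z).sub (hSq.mul_left (a * z))).congr_fun fun n ↦ ?_
    have := qBinomialTerm_succ_mul (a := a) z (one_sub_mul_pow_ne_zero hq hq n)
    rw [qBinomialTerm_mul, qBinomialTerm_mul, pow_succ]
    linear_combination this
  have hzero : qBinomialTerm q a z 0 - qBinomialTerm q a (z * q) 0 = 0 := by
    simp [qBinomialTerm, qPochhammer]
  have hdiff := (hasSum_nat_add_iff
    (f := fun n ↦ qBinomialTerm q a z n - qBinomialTerm q a (z * q) n) 1).1 hshift
  rw [sum_range_one, hzero, add_zero] at hdiff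
  linear_combination (hS.sub hSq).unique hdiff

theorem qBinomialSeries_mul_qPochhammer (hq : ‖q‖ < 1) (a : ℂ) {z : ℂ} (hz : ‖z‖ < 1) (N : ℕ) :
    qBinomialSeries q a z * qPochhammer q z N =
      qPochhammer q (a * z) N * qBinomialSeries q a (z * q ^ N) := by
  induction N with
  | zero => simp [qPochhammer]
  | succ N ih =>
    have step := qBinomialSeries_functional_eq hq a (norm_mul_pow_lt_one hq hz N)
    rw [mul_assoc, ← pow_succ] at step
    simp only [qPochhammer, prod_range_succ] at ih ⊢
    linear_combination (1 - z * q ^ N) * ih + (∏ k ∈ range N, (1 - a * z * q ^ k)) * step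

theorem tendsto_qBinomialSeries_mul_pow (hq : ‖q‖ < 1) (a z : ℂ) :
    Tendsto (fun N : ℕ ↦ qBinomialSeries q a (z * q ^ N)) atTop (𝓝 1) := by
  obtain ⟨C, hC⟩ := exists_norm_qBinomialTerm_le hq a
  have hsmall : Tendsto (fun N : ℕ ↦ z * q ^ N) atTop (𝓝 0) := by
    simpa using (tendsto_pow_atTop_nhds_zero_of_norm_lt_one hq).const_mul z
  have hnorm : Tendsto (fun N : ℕ ↦ ‖z * q ^ N‖) atTop (𝓝 0) := by simpa using hsmall.norm
  rw [← qBinomialSeries_zero q a]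
  refine tendsto_tsum_of_dominated_convergence (bound := fun n ↦ C * (1 / 2) ^ n)
    (summable_geometric_two.mul_left C) (fun n ↦ ?_) ?_
  · exact (continuous_const.mul (continuous_pow n)).continuousAt.tendsto.comp hsmall
  · filter_upwards [hnorm.eventually_le_const one_half_pos] with N hN n
    have hC0 : 0 ≤ C := by simpa using (norm_nonneg _).trans (hC 0 0)
    exact (hC _ n).trans (by gcongr)

theorem qBinomialSeries_eq (hq : ‖q‖ < 1) (a : ℂ) {z : ℂ} (hz : ‖z‖ < 1) :
    qBinomialSeries q a z = qPochhammerInf q (a * z) / qPochhammerInf q z := by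
  rw [eq_div_iff (qPochhammerInf_ne_zero hq (one_sub_mul_pow_ne_zero hq hz))]
  refine tendsto_nhds_unique ((tendsto_qPochhammer hq z).const_mul _) ?_
  simpa only [qBinomialSeries_mul_qPochhammer hq a hz, mul_one] using
    (tendsto_qPochhammer hq (a * z)).mul (tendsto_qBinomialSeries_mul_pow hq a z)

theorem qBinomialSeries_mul_pow (hq : ‖q‖ < 1) (a : ℂ) {z : ℂ} (hz : ‖z‖ < 1) (n : ℕ)
    (hn : qPochhammer q (a * z) n ≠ 0) :
    qBinomialSeries q a (z * q ^ n) = qPochhammerInf q (a * z) / qPochhammerInf q z *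
      (qPochhammer q z n / qPochhammer q (a * z) n) := by
  rw [qBinomialSeries_eq hq a (norm_mul_pow_lt_one hq hz n), ← mul_assoc]
  exact qPochhammerInf_mul_pow_div_qPochhammerInf hq n
    (qPochhammerInf_ne_zero hq (one_sub_mul_pow_ne_zero hq hz)) hn

theorem tsum_tsum_qBinomialTerm_comm (hq : ‖q‖ < 1) (a b : ℂ) {z w : ℂ} (hz : ‖z‖ < 1)
    (hw : ‖w‖ < 1) :
    ∑' n, ∑' m, qBinomialTerm q a z n * qBinomialTerm q b (w * q ^ n) m =
      ∑' m, ∑' n, qBinomialTerm q b w m * qBinomialTerm q a (z * q ^ m) n := by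
  have hleft (n m : ℕ) : qBinomialTerm q a z n * qBinomialTerm q b (w * q ^ n) m =
      qBinomialTerm q a z n * qBinomialTerm q b w m * (q ^ n) ^ m := by
    rw [qBinomialTerm_mul]; ring
  have hright (n m : ℕ) : qBinomialTerm q b w m * qBinomialTerm q a (z * q ^ m) n =
      qBinomialTerm q a z n * qBinomialTerm q b w m * (q ^ n) ^ m := by
    rw [qBinomialTerm_mul, ← pow_mul, ← pow_mul, mul_comm m n]; ring
  have hsum : Summable (Function.uncurry fun n m ↦
      qBinomialTerm q a z n * qBinomialTerm q b (w * q ^ n) m) := by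
    refine ((summable_norm_qBinomialTerm hq a hz).mul_norm
      (summable_norm_qBinomialTerm hq b hw)).of_norm_bounded fun p ↦ ?_
    rw [Function.uncurry_apply_pair, hleft, norm_mul _ ((q ^ p.1) ^ p.2), ← pow_mul, norm_pow]
    exact mul_le_of_le_one_right (norm_nonneg _) (pow_le_one₀ (norm_nonneg q) hq.le)
  rw [← hsum.tsum_comm]
  exact tsum_congr fun m ↦ tsum_congr fun n ↦ (hleft n m).trans (hright n m).symm

end

theorem heine_transformation (q α β γ τ : ℂ) (hq : ‖q‖ < 1) (hτ : ‖τ‖ < 1)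
    (hβ : ‖β‖ < 1) (hβ0 : β ≠ 0)
    (hγ : ∀ k : ℕ, γ * q ^ k ≠ 1) (hατ : ∀ k : ℕ, α * τ * q ^ k ≠ 1) :
    ∑' n : ℕ,
        (∏ k ∈ Finset.range n, (1 - α * q ^ k)) *
          (∏ k ∈ Finset.range n, (1 - β * q ^ k)) /
        ((∏ k ∈ Finset.range n, (1 - γ * q ^ k)) *
          (∏ k ∈ Finset.range n, (1 - q * q ^ k))) * τ ^ n =
      ((∏' k : ℕ, (1 - β * q ^ k)) * (∏' k : ℕ, (1 - α * τ * q ^ k)) /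
        ((∏' k : ℕ, (1 - γ * q ^ k)) * (∏' k : ℕ, (1 - τ * q ^ k)))) *
      ∑' n : ℕ,
        (∏ k ∈ Finset.range n, (1 - γ / β * q ^ k)) *
          (∏ k ∈ Finset.range n, (1 - τ * q ^ k)) /
        ((∏ k ∈ Finset.range n, (1 - α * τ * q ^ k)) *
          (∏ k ∈ Finset.range n, (1 - q * q ^ k))) * β ^ n := by
  simp only [← qPochhammer.eq_1, ← qPochhammerInf.eq_1]
  have hγ' (k : ℕ) : 1 - γ * q ^ k ≠ 0 := sub_ne_zero.2 (hγ k).symm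
  have hβinf := qPochhammerInf_ne_zero hq (one_sub_mul_pow_ne_zero hq hβ)
  have hγinf := qPochhammerInf_ne_zero hq hγ'
  have hβ_sum (n : ℕ) : qBinomialSeries q (γ / β) (β * q ^ n) =
      qPochhammerInf q γ / qPochhammerInf q β * (qPochhammer q β n / qPochhammer q γ n) := by
    simpa only [div_mul_cancel₀ γ hβ0] using qBinomialSeries_mul_pow hq (γ / β) hβ n
      (by simpa only [div_mul_cancel₀ γ hβ0] using qPochhammer_ne_zero hγ' n)
  have hτ_sum (m : ℕ) := qBinomialSeries_mul_pow hq α hτ m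
    (qPochhammer_ne_zero (fun k ↦ sub_ne_zero.2 (hατ k).symm) m)
  calc _ = ∑' n, qPochhammerInf q β / qPochhammerInf q γ *
        ∑' m, qBinomialTerm q α τ n * qBinomialTerm q (γ / β) (β * q ^ n) m := by
        refine tsum_congr fun n ↦ ?_
        rw [tsum_mul_left, ← qBinomialSeries, hβ_sum, qBinomialTerm]
        field_simp
    _ = qPochhammerInf q β / qPochhammerInf q γ *
        ∑' m, ∑' n, qBinomialTerm q (γ / β) β m * qBinomialTerm q α (τ * q ^ m) n := by
        rw [tsum_mul_left, tsum_tsum_qBinomialTerm_comm hq α (γ / β) hτ hβ]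
    _ = _ := by
        simp_rw [tsum_mul_left, ← qBinomialSeries.eq_1, hτ_sum, ← tsum_mul_left, qBinomialTerm]
        congr 1 with m
        ring
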